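/- For |q| < 1 and |z| < 1 (or as formal power series), ∑_{m≥0} z^m/(−q;q)_m = ((q;q)_∞/(−q;q)_∞) · ∑_{n≥0} (−1;q)_n q^n / ( (q;q)_n (z q^n; q)_∞ ). -/

import Mathlib

/-!
Expand `1/(zqⁿ;q)_∞ = ∑ₘ (zqⁿ)ᵐ/(q;q)ₘ` (Euler) in every summand on the right and swap the two
sums. The inner sum over `n` becomes `∑ₙ (−1;q)ₙ (q^(m+1))ⁿ/(q;q)ₙ`, which by the `q`-binomial
theorem is `(−q^(m+1);q)_∞/(q^(m+1);q)_∞`; splitting `(q;q)_∞ = (q;q)ₘ (q^(m+1);q)_∞` and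
`(−q;q)_∞ = (−q;q)ₘ (−q^(m+1);q)_∞` collapses the prefactor against it to `1/(−q;q)ₘ`.

The `q`-binomial theorem `∑ₙ (a;q)ₙ/(q;q)ₙ tⁿ = (at;q)_∞/(t;q)_∞` is proved from the functional
equation `(1 − t) F(t) = (1 − at) F(qt)` of the left side: iterating it gives
`(t;q)_N F(t) = (at;q)_N F(q^N t)`, and `F(q^N t) → F(0) = 1`.
-/

open Finset Filter Topology

variable {𝕜 : Type*} [NormedField 𝕜]

def qPochhammer (a q : 𝕜) (n : ℕ) : 𝕜 := ∏ i ∈ range n, (1 - a * q ^ i)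

noncomputable def qPochhammerInf (a q : 𝕜) : 𝕜 := ∏' k, (1 - a * q ^ k)

def qBinomialCoeff (a q : 𝕜) (n : ℕ) : 𝕜 := qPochhammer a q n / qPochhammer q q n

noncomputable def qBinomialSeries (a q t : 𝕜) : 𝕜 := ∑' n, qBinomialCoeff a q n * t ^ n

variable {q t : 𝕜}

@[simp]
lemma qPochhammer_zero (a q : 𝕜) : qPochhammer a q 0 = 1 := prod_range_zero _

lemma qPochhammer_succ (a q : 𝕜) (n : ℕ) :
    qPochhammer a q (n + 1) = qPochhammer a q n * (1 - a * q ^ n) :=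
  prod_range_succ _ _

@[simp]
lemma qPochhammer_zero_left (q : 𝕜) (n : ℕ) : qPochhammer 0 q n = 1 := by
  simp [qPochhammer]

lemma norm_mul_pow_le (x : 𝕜) (hq : ‖q‖ ≤ 1) (k : ℕ) : ‖x * q ^ k‖ ≤ ‖x‖ := by
  rw [norm_mul, norm_pow]
  exact mul_le_of_le_one_right (norm_nonneg x) (pow_le_one₀ (norm_nonneg q) hq)

lemma one_sub_mul_pow_ne_zero {a : 𝕜} (ha : ‖a‖ < 1) (hq : ‖q‖ ≤ 1) (k : ℕ) :
    1 - a * q ^ k ≠ 0 := by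
  intro h
  have hlt := (norm_mul_pow_le a hq k).trans_lt ha
  rw [← sub_eq_zero.mp h, norm_one] at hlt
  exact hlt.false

lemma qPochhammer_ne_zero {a : 𝕜} (ha : ‖a‖ < 1) (hq : ‖q‖ ≤ 1) (n : ℕ) :
    qPochhammer a q n ≠ 0 :=
  prod_ne_zero_iff.2 fun k _ ↦ one_sub_mul_pow_ne_zero ha hq k

@[simp]
lemma qBinomialCoeff_zero (a q : 𝕜) : qBinomialCoeff a q 0 = 1 := by
  simp [qBinomialCoeff]

lemma qBinomialCoeff_succ (a q : 𝕜) (n : ℕ) :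
    qBinomialCoeff a q (n + 1) =
      qBinomialCoeff a q n * ((1 - a * q ^ n) / (1 - q * q ^ n)) := by
  simp only [qBinomialCoeff, qPochhammer_succ, mul_div_mul_comm]

lemma summable_norm_mul_pow (a : 𝕜) (hq : ‖q‖ < 1) : Summable fun k : ℕ ↦ ‖a * q ^ k‖ := by
  simpa only [norm_mul, norm_pow] using
    (summable_geometric_of_lt_one (norm_nonneg q) hq).mul_left ‖a‖

lemma summable_norm_qBinomialCoeff_mul_pow (a : 𝕜) (hq : ‖q‖ < 1) (ht : ‖t‖ < 1) :
    Summable fun n ↦ ‖qBinomialCoeff a q n * t ^ n‖ := by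
  have hqn : Tendsto (q ^ ·) atTop (𝓝 (0 : 𝕜)) := tendsto_pow_atTop_nhds_zero_of_norm_lt_one hq
  have hratio : Tendsto (fun n ↦ ‖(1 - a * q ^ n) / (1 - q * q ^ n) * t‖) atTop (𝓝 ‖t‖) := by
    have := ((((tendsto_const_nhds (x := (1 : 𝕜))).sub (hqn.const_mul a)).div
      ((tendsto_const_nhds (x := (1 : 𝕜))).sub (hqn.const_mul q))
      (by simp : (1 : 𝕜) - q * 0 ≠ 0)).mul_const t).norm
    simpa using this
  refine summable_of_ratio_norm_eventually_le (r := (1 + ‖t‖) / 2) (by linarith) ?_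
  filter_upwards [hratio.eventually_le_const (by linarith : ‖t‖ < (1 + ‖t‖) / 2)] with n hn
  rw [norm_norm, norm_norm, qBinomialCoeff_succ, pow_succ]
  calc ‖qBinomialCoeff a q n * ((1 - a * q ^ n) / (1 - q * q ^ n)) * (t ^ n * t)‖
      = ‖(1 - a * q ^ n) / (1 - q * q ^ n) * t‖ * ‖qBinomialCoeff a q n * t ^ n‖ := by
        simp only [norm_mul]; ring
    _ ≤ (1 + ‖t‖) / 2 * ‖qBinomialCoeff a q n * t ^ n‖ := by gcongr

variable [CompleteSpace 𝕜]

lemma multipliable_one_sub_mul_pow (a : 𝕜) (hq : ‖q‖ < 1) :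
    Multipliable fun k : ℕ ↦ 1 - a * q ^ k := by
  simpa only [sub_eq_add_neg] using multipliable_one_add_of_summable (f := fun k ↦ -(a * q ^ k))
    (by simpa only [norm_neg] using summable_norm_mul_pow a hq)

lemma tendsto_qPochhammer (a : 𝕜) (hq : ‖q‖ < 1) :
    Tendsto (qPochhammer a q) atTop (𝓝 (qPochhammerInf a q)) :=
  (multipliable_one_sub_mul_pow a hq).hasProd.tendsto_prod_nat

lemma qPochhammerInf_ne_zero {a : 𝕜} (ha : ‖a‖ < 1) (hq : ‖q‖ < 1) : qPochhammerInf a q ≠ 0 := by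
  simpa only [qPochhammerInf, sub_eq_add_neg] using
    tprod_one_add_ne_zero_of_summable (f := fun k ↦ -(a * q ^ k))
      (fun k ↦ by simpa only [sub_eq_add_neg] using one_sub_mul_pow_ne_zero ha hq.le k)
      (by simpa only [norm_neg] using summable_norm_mul_pow a hq)

lemma qPochhammerInf_eq_qPochhammer_mul (a : 𝕜) (hq : ‖q‖ < 1) (n : ℕ) :
    qPochhammerInf a q = qPochhammer a q n * qPochhammerInf (a * q ^ n) q := by
  have hshift : Multipliable fun i : ℕ ↦ 1 - a * q ^ (i + n) :=
    (multipliable_one_sub_mul_pow (a * q ^ n) hq).congr fun i ↦ by ring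
  have hsplit : qPochhammer a q n * ∏' i : ℕ, (1 - a * q ^ (i + n)) = qPochhammerInf a q :=
    Multipliable.prod_mul_tprod_nat_mul' hshift
  have htail : ∏' i : ℕ, (1 - a * q ^ (i + n)) = ∏' i : ℕ, (1 - a * q ^ n * q ^ i) :=
    tprod_congr fun i ↦ by ring
  exact hsplit.symm.trans (congrArg (qPochhammer a q n * ·) htail)

lemma summable_qBinomialCoeff_mul_pow (a : 𝕜) (hq : ‖q‖ < 1) (ht : ‖t‖ < 1) :
    Summable fun n ↦ qBinomialCoeff a q n * t ^ n :=
  (summable_norm_qBinomialCoeff_mul_pow a hq ht).of_norm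

lemma one_sub_mul_qBinomialSeries (a : 𝕜) (hq : ‖q‖ < 1) (ht : ‖t‖ < 1) :
    (1 - t) * qBinomialSeries a q t = (1 - a * t) * qBinomialSeries a q (q * t) := by
  have hqt : ‖q * t‖ < 1 := by
    rw [norm_mul]; exact mul_lt_one_of_nonneg_of_lt_one_right hq.le (norm_nonneg t) ht
  set f := fun n ↦ qBinomialCoeff a q n * t ^ n
  set g := fun n ↦ qBinomialCoeff a q n * (q * t) ^ n
  have hf : Summable f := summable_qBinomialCoeff_mul_pow a hq ht
  have hg : Summable g := summable_qBinomialCoeff_mul_pow a hq hqt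
  -- because `c (n + 1) * (1 - q ^ (n + 1)) = c n * (1 - a * q ^ n)` for `c = qBinomialCoeff a q`
  have hshift : ∀ n, f (n + 1) - g (n + 1) = t * (f n - a * g n) := by
    intro n
    have hden : 1 - q * q ^ n ≠ 0 := by
      simpa [pow_succ'] using one_sub_mul_pow_ne_zero hq hq.le n
    have hinv : (1 - q * q ^ n) * (1 - q * q ^ n)⁻¹ = 1 := mul_inv_cancel₀ hden
    simp only [f, g, qBinomialCoeff_succ, div_eq_mul_inv]
    linear_combination qBinomialCoeff a q n * (1 - a * q ^ n) * t ^ (n + 1) * hinv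
  have hsum : ∑' n, (f n - g n) = t * ∑' n, (f n - a * g n) := by
    have h0 : f 0 - g 0 = 0 := by simp [f, g]
    rw [(hf.sub hg).tsum_eq_zero_add, h0, zero_add, ← tsum_mul_left]
    exact tsum_congr hshift
  rw [hf.tsum_sub hg, hf.tsum_sub (hg.mul_left a), tsum_mul_left] at hsum
  simp only [qBinomialSeries]
  linear_combination hsum

lemma qPochhammer_mul_qBinomialSeries (a : 𝕜) (hq : ‖q‖ < 1) (ht : ‖t‖ < 1) (N : ℕ) :
    qPochhammer t q N * qBinomialSeries a q t =
      qPochhammer (a * t) q N * qBinomialSeries a q (q ^ N * t) := by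
  induction N with
  | zero => simp
  | succ N ih =>
    have htN : ‖q ^ N * t‖ < 1 := by
      rw [mul_comm]; exact (norm_mul_pow_le t hq.le N).trans_lt ht
    have hstep := one_sub_mul_qBinomialSeries a hq htN
    rw [← mul_assoc q, ← pow_succ'] at hstep
    rw [qPochhammer_succ, qPochhammer_succ, mul_right_comm, ih]
    linear_combination qPochhammer (a * t) q N * hstep

lemma tendsto_qBinomialSeries_pow_mul (a : 𝕜) (hq : ‖q‖ < 1) (ht : ‖t‖ < 1) :
    Tendsto (fun N : ℕ ↦ qBinomialSeries a q (q ^ N * t)) atTop (𝓝 1) := by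
  have hqN : Tendsto (fun N : ℕ ↦ q ^ N * t) atTop (𝓝 0) := by
    simpa using (tendsto_pow_atTop_nhds_zero_of_norm_lt_one hq).mul_const t
  have hbound : ∀ N : ℕ, ∀ n, ‖qBinomialCoeff a q n * (q ^ N * t) ^ n‖ ≤
      ‖qBinomialCoeff a q n * t ^ n‖ := fun N n ↦ by
    simp only [norm_mul, norm_pow]
    gcongr
    exact mul_le_of_le_one_left (norm_nonneg t) (pow_le_one₀ (norm_nonneg q) hq.le)
  have h := tendsto_tsum_of_dominated_convergence (summable_norm_qBinomialCoeff_mul_pow a hq ht)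
    (fun n ↦ (hqN.pow n).const_mul (qBinomialCoeff a q n)) (Eventually.of_forall hbound)
  rwa [tsum_eq_single 0 fun n hn ↦ by simp [hn], pow_zero, qBinomialCoeff_zero, mul_one] at h

theorem qBinomialSeries_mul_qPochhammerInf (a : 𝕜) (hq : ‖q‖ < 1) (ht : ‖t‖ < 1) :
    qBinomialSeries a q t * qPochhammerInf t q = qPochhammerInf (a * t) q := by
  have hlhs : Tendsto (fun N ↦ qPochhammer t q N * qBinomialSeries a q t) atTop
      (𝓝 (qPochhammerInf t q * qBinomialSeries a q t)) :=
    (tendsto_qPochhammer t hq).mul_const _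
  have hrhs : Tendsto (fun N ↦ qPochhammer (a * t) q N * qBinomialSeries a q (q ^ N * t)) atTop
      (𝓝 (qPochhammerInf (a * t) q * 1)) :=
    (tendsto_qPochhammer (a * t) hq).mul (tendsto_qBinomialSeries_pow_mul a hq ht)
  rw [mul_comm, ← mul_one (qPochhammerInf (a * t) q)]
  exact tendsto_nhds_unique (hlhs.congr (qPochhammer_mul_qBinomialSeries a hq ht)) hrhs

theorem qBinomialSeries_eq_div (a : 𝕜) (hq : ‖q‖ < 1) (ht : ‖t‖ < 1) :
    qBinomialSeries a q t = qPochhammerInf (a * t) q / qPochhammerInf t q :=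
  eq_div_of_mul_eq (qPochhammerInf_ne_zero ht hq) (qBinomialSeries_mul_qPochhammerInf a hq ht)

theorem qBinomialSeries_zero_left (hq : ‖q‖ < 1) (ht : ‖t‖ < 1) :
    qBinomialSeries 0 q t = (qPochhammerInf t q)⁻¹ := by
  simp [qBinomialSeries_eq_div 0 hq ht, qPochhammerInf]

theorem tsum_qPochhammer_mul_pow_div_qPochhammerInf (b z : 𝕜) (hq : ‖q‖ < 1) (hz : ‖z‖ < 1) :
    ∑' n, qPochhammer b q n * q ^ n / (qPochhammer q q n * qPochhammerInf (z * q ^ n) q) =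
      ∑' m, z ^ m / qPochhammer q q m *
        (qPochhammerInf (b * q * q ^ m) q / qPochhammerInf (q * q ^ m) q) := by
  set G : ℕ → ℕ → 𝕜 := fun n m ↦
    qBinomialCoeff b q n * q ^ n * (qBinomialCoeff 0 q m * (z * q ^ n) ^ m)
  have hrow : ∀ n, qPochhammer b q n * q ^ n / (qPochhammer q q n * qPochhammerInf (z * q ^ n) q) =
      ∑' m, G n m := fun n ↦ by
    rw [tsum_mul_left, ← qBinomialSeries,
      qBinomialSeries_zero_left hq ((norm_mul_pow_le z hq.le n).trans_lt hz), qBinomialCoeff,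
      ← div_div, div_mul_eq_mul_div, div_eq_mul_inv]
  have hcol : ∀ m, ∑' n, G n m = z ^ m / qPochhammer q q m *
      (qPochhammerInf (b * q * q ^ m) q / qPochhammerInf (q * q ^ m) q) := fun m ↦ by
    have hG : ∀ n, G n m = z ^ m / qPochhammer q q m * (qBinomialCoeff b q n * (q * q ^ m) ^ n) :=
      fun n ↦ by simp only [G, qBinomialCoeff, qPochhammer_zero_left]; ring
    rw [tsum_congr hG, tsum_mul_left, ← qBinomialSeries,
      qBinomialSeries_eq_div b hq ((norm_mul_pow_le q hq.le m).trans_lt hq), mul_assoc]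
  have hsum : Summable (Function.uncurry G) := by
    refine .of_norm_bounded ((summable_norm_qBinomialCoeff_mul_pow b hq hq).mul_of_nonneg
      (summable_norm_qBinomialCoeff_mul_pow 0 hq hz) (fun _ ↦ norm_nonneg _)
      (fun _ ↦ norm_nonneg _)) fun ⟨n, m⟩ ↦ ?_
    simp only [Function.uncurry, G, norm_mul, norm_pow]
    gcongr
    exact mul_le_of_le_one_right (norm_nonneg z) (pow_le_one₀ (norm_nonneg q) hq.le)
  rw [tsum_congr hrow, ← hsum.tsum_comm, tsum_congr hcol]

theorem tsum_pow_div_qPochhammer (b z : 𝕜) (hq : ‖q‖ < 1) (hz : ‖z‖ < 1) (hb : ‖b * q‖ < 1) :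
    ∑' m, z ^ m / qPochhammer (b * q) q m =
      qPochhammerInf q q / qPochhammerInf (b * q) q *
        ∑' n, qPochhammer b q n * q ^ n / (qPochhammer q q n * qPochhammerInf (z * q ^ n) q) := by
  rw [tsum_qPochhammer_mul_pow_div_qPochhammerInf b z hq hz, ← tsum_mul_left]
  refine tsum_congr fun m ↦ ?_
  rw [qPochhammerInf_eq_qPochhammer_mul q hq m, qPochhammerInf_eq_qPochhammer_mul (b * q) hq m]
  have := qPochhammer_ne_zero hq hq.le m
  have := qPochhammer_ne_zero hb hq.le m
  have := qPochhammerInf_ne_zero ((norm_mul_pow_le q hq.le m).trans_lt hq) hq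
  have := qPochhammerInf_ne_zero ((norm_mul_pow_le (b * q) hq.le m).trans_lt hb) hq
  field_simp

/-- For `|q| < 1` and `|z| < 1`,
`∑_{m≥0} zᵐ/(−q;q)_m = ((q;q)_∞/(−q;q)_∞) · ∑_{n≥0} (−1;q)_n qⁿ / ((q;q)_n (z qⁿ;q)_∞)`. -/
theorem heine_transformed_sum (q z : ℂ) (hq : ‖q‖ < 1) (hz : ‖z‖ < 1) :
    ∑' m : ℕ, z ^ m / ∏ i ∈ range m, (1 + q ^ (i + 1)) =
      (∏' k : ℕ, (1 - q ^ (k + 1))) / (∏' k : ℕ, (1 + q ^ (k + 1))) *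
        ∑' n : ℕ, (∏ i ∈ range n, (1 + q ^ i)) * q ^ n /
          ((∏ i ∈ range n, (1 - q ^ (i + 1))) * ∏' k : ℕ, (1 - z * q ^ (n + k))) := by
  simp only [show ∀ n, ∏ i ∈ range n, (1 + q ^ (i + 1)) = qPochhammer (-1 * q) q n from
      fun n ↦ prod_congr rfl fun i _ ↦ by ring,
    show ∀ n, ∏ i ∈ range n, (1 - q ^ (i + 1)) = qPochhammer q q n from
      fun n ↦ prod_congr rfl fun i _ ↦ by ring,
    show ∀ n, ∏ i ∈ range n, (1 + q ^ i) = qPochhammer (-1) q n from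
      fun n ↦ prod_congr rfl fun i _ ↦ by ring,
    show ∏' k : ℕ, (1 - q ^ (k + 1)) = qPochhammerInf q q from tprod_congr fun k ↦ by ring,
    show ∏' k : ℕ, (1 + q ^ (k + 1)) = qPochhammerInf (-1 * q) q from tprod_congr fun k ↦ by ring,
    show ∀ n, ∏' k : ℕ, (1 - z * q ^ (n + k)) = qPochhammerInf (z * q ^ n) q from
      fun n ↦ tprod_congr fun k ↦ by ring]
  exact tsum_pow_div_qPochhammer (-1) z hq hz (by rwa [neg_one_mul, norm_neg])
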